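/- arXiv:1502.05548 — 10 statements merged into one kernel-verified Lean document; each statement's English description precedes it below -/
import Mathlib

section
/- For two agents at locations x₁ < x₂ with x₁ + b < x₂ - b, the minimum over y ∈ ℝ of max(cost(y,x₁), cost(y,x₂)) equals c + ((x₂ - b) - (x₁ + b))/2, and it is attained at y = (x₁ + x₂)/2. -/
noncomputable def cost (b c y x : ℝ) : ℝ := c + min |x - b - y| |x + b - y|

theorem stmt_3 (b c x₁ x₂ : ℝ) (hb : 0 < b) (hc : 0 < c) (h12 : x₁ < x₂)
    (hgap : x₁ + b < x₂ - b) :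
    IsLeast (Set.range fun y => max (cost b c y x₁) (cost b c y x₂))
      (c + ((x₂ - b) - (x₁ + b)) / 2) ∧
    max (cost b c ((x₁ + x₂) / 2) x₁) (cost b c ((x₁ + x₂) / 2) x₂)
      = c + ((x₂ - b) - (x₁ + b)) / 2 := by
  have key : max (cost b c ((x₁ + x₂) / 2) x₁) (cost b c ((x₁ + x₂) / 2) x₂)
      = c + ((x₂ - b) - (x₁ + b)) / 2 := by
    unfold cost
    rw [abs_of_nonpos (by linarith), abs_of_nonpos (by linarith),
        abs_of_nonneg (by linarith), abs_of_nonneg (by linarith),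
        min_eq_right (by linarith), min_eq_left (by linarith),
        max_eq_left (by linarith)]
    ring
  have lb : ∀ y : ℝ, c + ((x₂ - b) - (x₁ + b)) / 2
      ≤ max (cost b c y x₁) (cost b c y x₂) := by
    intro y
    have l1 := le_max_left (cost b c y x₁) (cost b c y x₂)
    have l2 := le_max_right (cost b c y x₁) (cost b c y x₂)
    have hk : ((x₂ - b) - (x₁ + b))
        ≤ min |x₁ - b - y| |x₁ + b - y| + min |x₂ - b - y| |x₂ + b - y| := by
      rcases min_cases |x₁ - b - y| |x₁ + b - y| with ⟨h1, _⟩ | ⟨h1, _⟩ <;>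
      rcases min_cases |x₂ - b - y| |x₂ + b - y| with ⟨h2, _⟩ | ⟨h2, _⟩ <;>
      rw [h1, h2] <;>
      rcases abs_cases (x₁ - b - y) with ⟨e1, s1⟩ | ⟨e1, s1⟩ <;>
      rcases abs_cases (x₁ + b - y) with ⟨e2, s2⟩ | ⟨e2, s2⟩ <;>
      rcases abs_cases (x₂ - b - y) with ⟨e3, s3⟩ | ⟨e3, s3⟩ <;>
      rcases abs_cases (x₂ + b - y) with ⟨e4, s4⟩ | ⟨e4, s4⟩ <;>
      linarith
    simp only [cost] at l1 l2 ⊢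
    linarith
  refine ⟨⟨⟨(x₁ + x₂) / 2, key⟩, ?_⟩, key⟩
  rintro v ⟨y, rfl⟩
  exact lb y
end

section
/- Let x₁ ≤ x₂ ≤ ... ≤ xₙ and let x_m be the median location (index ⌈n/2⌉). Then there exists an optimal location for the social cost in the interval [x_m - b, x_m + b]; that is, min over y ∈ [x_m - b, x_m + b] of Σᵢ cost(y, xᵢ) equals min over all y ∈ ℝ of Σᵢ cost(y, xᵢ). -/
lemma cost_eq (b c y x : ℝ) (hb : 0 ≤ b) : cost b c y x = c + |(|y - x|) - b| := by
  unfold cost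
  congr 1
  have h1 : x - b - y = (x - y) - b := by ring
  have h2 : x + b - y = (x - y) + b := by ring
  rw [h1, h2, abs_sub_comm y x]
  set A := x - y with hA
  rcases le_total 0 A with h | h
  · rw [abs_of_nonneg (by linarith : (0:ℝ) ≤ A + b),
      min_eq_left (abs_le.mpr ⟨by linarith, by linarith⟩), abs_of_nonneg h]
  · have hAb : |A - b| = b - A := by rw [abs_of_nonpos (by linarith : A - b ≤ 0)]; ring
    rw [hAb, min_eq_right (abs_le.mpr ⟨by linarith, by linarith⟩), abs_of_nonpos h,
      show -A - b = -(A + b) by ring, abs_neg]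

lemma g_lip (b xi z w : ℝ) : -|z - w| ≤ |(|z - xi|) - b| - |(|w - xi|) - b| := by
  have h1 := abs_sub_abs_le_abs_sub ((|w - xi|) - b) ((|z - xi|) - b)
  have h2 := abs_abs_sub_abs_le_abs_sub (w - xi) (z - xi)
  have h3 : |w - xi| - b - (|z - xi| - b) = |w - xi| - |z - xi| := by ring
  have h4 : w - xi - (z - xi) = w - z := by ring
  rw [h3] at h1
  rw [h4] at h2
  have h5 : |w - z| = |z - w| := abs_sub_comm w z
  linarith [le_abs_self ((|(|w - xi|) - b|) - (|(|z - xi|) - b|))]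

theorem stmt_5 (b c : ℝ) (hb : 0 < b) (hc : 0 < c) (n : ℕ) (hn : 0 < n)
    (x : Fin n → ℝ) (hmono : Monotone x)
    (m : Fin n) (hm : (m : ℕ) = (n + 1) / 2 - 1) :
    ∃ y ∈ Set.Icc (x m - b) (x m + b),
      ∀ z : ℝ, (∑ i, cost b c y (x i)) ≤ ∑ i, cost b c z (x i) := by
  have hmlt : (m : ℕ) < n := m.isLt
  have hcard1 : n ≤ 2 * (m : ℕ) + 2 := by omega
  have hcard2 : 2 * (m : ℕ) ≤ n := by omega
  set f : ℝ → ℝ := fun y => ∑ i, cost b c y (x i) with hf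
  have hcont : Continuous f := by
    apply continuous_finset_sum
    intro i _
    unfold cost
    fun_prop
  obtain ⟨y, hy, hymin⟩ := isCompact_Icc.exists_isMinOn
    (Set.nonempty_Icc.mpr (by linarith)) hcont.continuousOn
    (f := f) (s := Set.Icc (x m - b) (x m + b))
  -- right monotone lemma
  have hright : ∀ z : ℝ, x m + b ≤ z → f (x m + b) ≤ f z := by
    intro z hz
    set w : ℝ := x m + b with hw
    have hd : 0 ≤ z - w := by linarith
    have key : ∀ i : Fin n,
        cost b c w (x i) + (-(z - w) + (if (i:ℕ) ≤ (m:ℕ) then 2*(z - w) else 0))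
          ≤ cost b c z (x i) := by
      intro i
      rw [cost_eq _ _ _ _ hb.le, cost_eq _ _ _ _ hb.le]
      split_ifs with h
      · have hxi : x i ≤ x m := hmono (Fin.le_def.mpr h)
        have h1 : |w - x i| = w - x i := abs_of_nonneg (by rw [hw]; linarith)
        have h2 : |z - x i| = z - x i := abs_of_nonneg (by linarith)
        rw [h1, h2, abs_of_nonneg (by rw [hw] at *; linarith),
          abs_of_nonneg (by rw [hw] at *; linarith)]
        linarith
      · have hl := g_lip b (x i) z w
        have : |z - w| = z - w := abs_of_nonneg hd
        rw [this] at hl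
        linarith
    have hsum := Finset.sum_le_sum (fun i (_ : i ∈ Finset.univ) => key i)
    rw [Finset.sum_add_distrib, Finset.sum_add_distrib, Finset.sum_const,
      Finset.card_univ, Fintype.card_fin] at hsum
    have hite : ∑ i : Fin n, (if (i:ℕ) ≤ (m:ℕ) then 2*(z - w) else 0)
        = ((m:ℕ) + 1) * (2*(z - w)) := by
      rw [Fin.sum_univ_eq_sum_range (fun k => if k ≤ (m:ℕ) then 2*(z - w) else 0)]
      rw [← Finset.sum_subset (Finset.range_subset_range.mpr (show (m:ℕ)+1 ≤ n by omega))
        (fun k _ hk => by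
          rw [Finset.mem_range, not_lt] at hk
          simp [Nat.not_le.mpr (by omega : (m:ℕ) < k)])]
      have hc2 : ∀ k ∈ Finset.range ((m:ℕ)+1),
          (if k ≤ (m:ℕ) then 2*(z - w) else 0) = 2*(z - w) :=
        fun k hk => if_pos (by rw [Finset.mem_range] at hk; omega)
      rw [Finset.sum_congr rfl hc2, Finset.sum_const, Finset.card_range, nsmul_eq_mul]
      push_cast; ring
    rw [hite] at hsum
    have hn' : (n:ℝ) ≤ 2*(m:ℕ) + 2 := by exact_mod_cast hcard1
    have : (0:ℝ) ≤ n • (-(z - w)) + ((m:ℕ) + 1) * (2*(z - w)) := by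
      rw [nsmul_eq_mul]
      nlinarith
    simp only [hf]
    linarith
  -- left monotone lemma
  have hleft : ∀ z : ℝ, z ≤ x m - b → f (x m - b) ≤ f z := by
    intro z hz
    set w : ℝ := x m - b with hw
    have hd : 0 ≤ w - z := by linarith
    have key : ∀ i : Fin n,
        cost b c w (x i) + ((w - z) + (if (i:ℕ) < (m:ℕ) then -(2*(w - z)) else 0))
          ≤ cost b c z (x i) := by
      intro i
      rw [cost_eq _ _ _ _ hb.le, cost_eq _ _ _ _ hb.le]
      split_ifs with h
      · have hl := g_lip b (x i) z w
        have : |z - w| = w - z := by rw [abs_sub_comm]; exact abs_of_nonneg hd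
        rw [this] at hl
        linarith
      · have hxi : x m ≤ x i := hmono (Fin.le_def.mpr (by omega))
        have h1 : |w - x i| = x i - w := by
          rw [abs_sub_comm]; exact abs_of_nonneg (by rw [hw]; linarith)
        have h2 : |z - x i| = x i - z := by
          rw [abs_sub_comm]; exact abs_of_nonneg (by linarith)
        rw [h1, h2, abs_of_nonneg (by rw [hw] at *; linarith),
          abs_of_nonneg (by rw [hw] at *; linarith)]
        linarith
    have hsum := Finset.sum_le_sum (fun i (_ : i ∈ Finset.univ) => key i)
    rw [Finset.sum_add_distrib, Finset.sum_add_distrib, Finset.sum_const,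
      Finset.card_univ, Fintype.card_fin] at hsum
    have hite : ∑ i : Fin n, (if (i:ℕ) < (m:ℕ) then -(2*(w - z)) else 0)
        = (m:ℕ) * (-(2*(w - z))) := by
      rw [Fin.sum_univ_eq_sum_range (fun k => if k < (m:ℕ) then -(2*(w - z)) else 0)]
      rw [← Finset.sum_subset (Finset.range_subset_range.mpr hmlt.le)
        (fun k _ hk => by
          rw [Finset.mem_range, not_lt] at hk
          simp [Nat.not_lt.mpr hk])]
      have hc2 : ∀ k ∈ Finset.range (m:ℕ),
          (if k < (m:ℕ) then -(2*(w - z)) else 0) = -(2*(w - z)) :=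
        fun k hk => if_pos (by rw [Finset.mem_range] at hk; omega)
      rw [Finset.sum_congr rfl hc2, Finset.sum_const, Finset.card_range, nsmul_eq_mul]
    rw [hite] at hsum
    have hn' : 2*((m:ℕ):ℝ) ≤ (n:ℝ) := by exact_mod_cast hcard2
    have : (0:ℝ) ≤ n • (w - z) + (m:ℕ) * (-(2*(w - z))) := by
      rw [nsmul_eq_mul]
      nlinarith
    simp only [hf]
    linarith
  refine ⟨y, hy, fun z => ?_⟩
  rcases le_or_gt z (x m - b) with h1 | h1
  · exact le_trans (isMinOn_iff.mp hymin _ ⟨le_refl _, by linarith⟩) (hleft z h1)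
  rcases le_or_gt (x m + b) z with h2 | h2
  · exact le_trans (isMinOn_iff.mp hymin _ ⟨by linarith, le_refl _⟩) (hright z h2)
  · exact isMinOn_iff.mp hymin z ⟨h1.le, h2.le⟩
end

section
/- The randomized mechanism that outputs x_m - b with probability 1/2 and x_m + b with probability 1/2, where x_m is the median of the reported locations, has expected social cost at most SC_opt + n·b on every instance, where SC_opt is the minimum social cost over all locations. Consequently, since SC_opt ≥ n·c, its approximation ratio for the social cost is at most 1 + b/c. -/
lemma pair_abs (a b t y : ℝ) (h1 : a ≤ t) (h2 : t ≤ b) :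
    |a - t| + |b - t| ≤ |a - y| + |b - y| := by
  have h3 : |a - b| ≤ |a - y| + |y - b| := abs_sub_le a y b
  rw [abs_of_nonpos (by linarith : a - b ≤ 0), abs_sub_comm y b] at h3
  rw [abs_of_nonpos (by linarith : a - t ≤ 0), abs_of_nonneg (by linarith : (0:ℝ) ≤ b - t)]
  linarith

lemma med_opt (n : ℕ) (x : Fin n → ℝ) (hmono : Monotone x)
    (m : Fin n) (hm : (m : ℕ) = (n + 1) / 2 - 1) (y : ℝ) :
    ∑ i, |x i - x m| ≤ ∑ i, |x i - y| := by
  have hrev : ∀ f : Fin n → ℝ, ∑ i : Fin n, f i.rev = ∑ i : Fin n, f i := by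
    intro f
    exact Equiv.sum_comp (⟨Fin.rev, Fin.rev, Fin.rev_rev, Fin.rev_rev⟩ : Equiv (Fin n) (Fin n)) f
  have hpt : ∀ i : Fin n, |x i - x m| + |x i.rev - x m| ≤ |x i - y| + |x i.rev - y| := by
    intro i
    have hiv : (i.rev : ℕ) = n - (i + 1) := Fin.val_rev i
    by_cases h : (i : ℕ) ≤ (m : ℕ)
    · have h1 : x i ≤ x m := hmono (by exact h)
      have h2 : x m ≤ x i.rev := hmono (by
        show (m : ℕ) ≤ (i.rev : ℕ)
        have := i.isLt; have := m.isLt; omega)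
      have := pair_abs (x i) (x i.rev) (x m) y h1 h2
      linarith
    · have h1 : x i.rev ≤ x m := hmono (by
        show (i.rev : ℕ) ≤ (m : ℕ)
        have := i.isLt; have := m.isLt; omega)
      have h2 : x m ≤ x i := hmono (by
        show (m : ℕ) ≤ (i : ℕ); omega)
      have := pair_abs (x i.rev) (x i) (x m) y h1 h2
      linarith
  have hsum : ∑ i : Fin n, (|x i - x m| + |x i.rev - x m|) ≤ ∑ i : Fin n, (|x i - y| + |x i.rev - y|) :=
    Finset.sum_le_sum (fun i _ => hpt i)
  rw [Finset.sum_add_distrib, Finset.sum_add_distrib,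
    hrev (fun i => |x i - x m|), hrev (fun i => |x i - y|)] at hsum
  linarith

theorem stmt_7 (b c : ℝ) (hb : 0 < b) (hc : 0 < c) (n : ℕ) (hn : 0 < n)
    (x : Fin n → ℝ) (hmono : Monotone x)
    (m : Fin n) (hm : (m : ℕ) = (n + 1) / 2 - 1)
    (SCopt : ℝ) (hopt : IsGLB (Set.range fun y => ∑ i, cost b c y (x i)) SCopt) :
    (1 / 2) * (∑ i, cost b c (x m - b) (x i)) + (1 / 2) * (∑ i, cost b c (x m + b) (x i))
        ≤ SCopt + n * b ∧
    (1 / 2) * (∑ i, cost b c (x m - b) (x i)) + (1 / 2) * (∑ i, cost b c (x m + b) (x i))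
        ≤ (1 + b / c) * SCopt := by
  set E := (1 / 2) * (∑ i, cost b c (x m - b) (x i)) +
      (1 / 2) * (∑ i, cost b c (x m + b) (x i)) with hE
  -- upper bound on E
  have hupper : E ≤ n * c + ∑ i, |x i - x m| := by
    have h1 : ∑ i, cost b c (x m - b) (x i) ≤ ∑ i, (c + |x i - x m|) := by
      apply Finset.sum_le_sum; intro i _
      unfold cost
      have : min |x i - b - (x m - b)| |x i + b - (x m - b)| ≤ |x i - x m| := by
        refine (min_le_left _ _).trans (le_of_eq ?_)
        congr 1; ring
      linarith
    have h2 : ∑ i, cost b c (x m + b) (x i) ≤ ∑ i, (c + |x i - x m|) := by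
      apply Finset.sum_le_sum; intro i _
      unfold cost
      have : min |x i - b - (x m + b)| |x i + b - (x m + b)| ≤ |x i - x m| := by
        refine (min_le_right _ _).trans (le_of_eq ?_)
        congr 1; ring
      linarith
    have hs : ∑ i, (c + |x i - x m|) = n * c + ∑ i, |x i - x m| := by
      rw [Finset.sum_add_distrib, Finset.sum_const, Finset.card_univ, Fintype.card_fin,
        nsmul_eq_mul]
    rw [hs] at h1 h2
    rw [hE]; linarith
  -- lower bound on every SC_y
  have hlower : ∀ y : ℝ, n * c + (∑ i, |x i - x m|) - n * b ≤ ∑ i, cost b c y (x i) := by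
    intro y
    have h1 : ∀ i : Fin n, c + |x i - y| - b ≤ cost b c y (x i) := by
      intro i
      unfold cost
      have ha : |x i - y| - b ≤ |x i - b - y| := by
        have := abs_sub_abs_le_abs_sub (x i - y) (x i - b - y)
        have he : x i - y - (x i - b - y) = b := by ring
        rw [he, abs_of_pos hb] at this
        linarith
      have hb2 : |x i - y| - b ≤ |x i + b - y| := by
        have := abs_sub_abs_le_abs_sub (x i - y) (x i + b - y)
        have he : x i - y - (x i + b - y) = -b := by ring
        rw [he, abs_neg, abs_of_pos hb] at this
        linarith
      have := le_min ha hb2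
      linarith
    have hsum : ∑ i : Fin n, (c + |x i - y| - b) ≤ ∑ i, cost b c y (x i) :=
      Finset.sum_le_sum (fun i _ => h1 i)
    have hs : ∑ i : Fin n, (c + |x i - y| - b) = n * c + (∑ i, |x i - y|) - n * b := by
      simp [Finset.sum_sub_distrib, Finset.sum_add_distrib, Finset.sum_const,
        Finset.card_univ, nsmul_eq_mul]
    rw [hs] at hsum
    have := med_opt n x hmono m hm y
    linarith
  -- E - n*b is a lower bound of the range
  have hlb : E - n * b ∈ lowerBounds (Set.range fun y => ∑ i, cost b c y (x i)) := by
    rintro s ⟨y, rfl⟩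
    have := hlower y
    linarith
  have hEopt : E - n * b ≤ SCopt := hopt.2 hlb
  -- SCopt ≥ n * c
  have hnc : (n : ℝ) * c ∈ lowerBounds (Set.range fun y => ∑ i, cost b c y (x i)) := by
    rintro s ⟨y, rfl⟩
    have h1 : ∀ i : Fin n, c ≤ cost b c y (x i) := by
      intro i; unfold cost
      have : (0:ℝ) ≤ min |x i - b - y| |x i + b - y| :=
        le_min (abs_nonneg _) (abs_nonneg _)
      linarith
    have hsum : ∑ _i : Fin n, c ≤ ∑ i, cost b c y (x i) :=
      Finset.sum_le_sum (fun i _ => h1 i)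
    simp only [Finset.sum_const, Finset.card_univ, Fintype.card_fin, nsmul_eq_mul] at hsum
    linarith
  have hncopt : (n : ℝ) * c ≤ SCopt := hopt.2 hnc
  constructor
  · linarith
  · have hkey : (n : ℝ) * b ≤ (b / c) * SCopt := by
      have h1 : (b / c) * ((n : ℝ) * c) ≤ (b / c) * SCopt := by
        apply mul_le_mul_of_nonneg_left hncopt
        positivity
      have h2 : (b / c) * ((n : ℝ) * c) = (n : ℝ) * b := by
        field_simp
      linarith
    calc E ≤ SCopt + (n : ℝ) * b := by linarith
      _ ≤ SCopt + (b / c) * SCopt := by linarith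
      _ = (1 + b / c) * SCopt := by ring
end

section
/- For the instance with n = 2k agents where x₁ = ... = x_{k-1} = x_k - b = x_{k+1} - 2b = ... = x_n - 2b, the optimal social cost equals n·c + b, while the expected social cost of the median-peaks mechanism (outputting x_k - b or x_k + b each with probability 1/2) equals n·c + (n-1)·b. Hence its ratio on this instance is (n·c + (n-1)·b)/(n·c + b), which tends to 1 + b/c as n → ∞. -/
open Finset Filter Topology

theorem sum_fin_two_mul_three_blocks {M : Type*} [AddCommMonoid M] (k : ℕ) (hk : 1 ≤ k)
    (p q r : M) :
    ∑ i : Fin (2 * k), (if (i : ℕ) < k - 1 then p else if (i : ℕ) = k - 1 then q else r)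
      = (k - 1) • p + q + k • r := by
  obtain ⟨m, rfl⟩ := Nat.exists_eq_add_of_le' hk
  have tail_lt : ∀ j, ¬ m + 1 + j < m := by omega
  have tail_ne : ∀ j, m + 1 + j ≠ m := by omega
  rw [Nat.add_sub_cancel,
    Fin.sum_univ_eq_sum_range (fun i => if i < m then p else if i = m then q else r),
    show 2 * (m + 1) = m + 1 + (m + 1) by ring, sum_range_add, sum_range_succ]
  simp +contextual [sum_ite_of_true, tail_lt, tail_ne]

section Cost

variable (b c : ℝ)

theorem le_cost (y x : ℝ) : c ≤ cost b c y x :=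
  le_add_of_nonneg_right (le_min (abs_nonneg _) (abs_nonneg _))

theorem cost_self (y : ℝ) : cost b c y y = c + |b| := by
  simp [cost, abs_neg]

theorem cost_of_eq_add {y x : ℝ} (h : x = y + b) : cost b c y x = c := by
  simp [cost, h]

theorem cost_of_eq_sub {y x : ℝ} (h : x = y - b) : cost b c y x = c := by
  simp [cost, h]

theorem abs_le_abs_three_mul : |b| ≤ |3 * b| := by
  rw [abs_mul, abs_of_pos (three_pos : (0 : ℝ) < 3)]
  linarith [abs_nonneg b]

theorem cost_of_eq_add_two_mul {y x : ℝ} (h : x = y + 2 * b) : cost b c y x = c + |b| := by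
  simp only [cost, h, show y + 2 * b - b - y = b by ring, show y + 2 * b + b - y = 3 * b by ring,
    min_eq_left (abs_le_abs_three_mul b)]

theorem cost_of_eq_sub_two_mul {y x : ℝ} (h : x = y - 2 * b) : cost b c y x = c + |b| := by
  simp only [cost, h, show y - 2 * b - b - y = -(3 * b) by ring, show y - 2 * b + b - y = -b by ring,
    abs_neg, min_eq_right (abs_le_abs_three_mul b)]

-- Every peak `x ± b` lies at distance at least `|b|` from every peak `x + b ± b`.
theorem cost_add_cost_add_ge (y x : ℝ) : 2 * c + |b| ≤ cost b c y x + cost b c y (x + b) := by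
  unfold cost
  rcases min_cases |x - b - y| |x + b - y| with ⟨h₁, -⟩ | ⟨h₁, -⟩ <;>
  rcases min_cases |x + b - b - y| |x + b + b - y| with ⟨h₂, -⟩ | ⟨h₂, -⟩ <;>
  rw [h₁, h₂] <;>
  cases abs_cases b <;> cases abs_cases (x - b - y) <;> cases abs_cases (x + b - y) <;>
  cases abs_cases (x + b - b - y) <;> cases abs_cases (x + b + b - y) <;> linarith

variable (a k : ℝ)

noncomputable def threeBlockCost (y : ℝ) : ℝ :=
  (k - 1) * cost b c y a + cost b c y (a + b) + k * cost b c y (a + 2 * b)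

theorem threeBlockCost_median : threeBlockCost b c a k (a + b) = 2 * k * c + |b| := by
  rw [threeBlockCost, cost_of_eq_sub b c (by ring), cost_self, cost_of_eq_add b c (by ring)]
  ring

theorem threeBlockCost_median_le (hk : 1 ≤ k) (y : ℝ) :
    2 * k * c + |b| ≤ threeBlockCost b c a k y := by
  have median_pair := cost_add_cost_add_ge b c y (a + b)
  rw [add_assoc, ← two_mul] at median_pair
  have left := mul_le_mul_of_nonneg_left (le_cost b c y a) (sub_nonneg.2 hk)
  have right := mul_le_mul_of_nonneg_left (le_cost b c y (a + 2 * b)) (sub_nonneg.2 hk)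
  rw [threeBlockCost]
  linarith

theorem threeBlockCost_left_peak : threeBlockCost b c a k a = 2 * k * c + (2 * k - 1) * |b| := by
  rw [threeBlockCost, cost_self, cost_of_eq_add b c (by ring), cost_of_eq_add_two_mul b c rfl]
  ring

theorem threeBlockCost_right_peak :
    threeBlockCost b c a k (a + 2 * b) = 2 * k * c + (2 * k - 1) * |b| := by
  rw [threeBlockCost, cost_of_eq_sub_two_mul b c (by ring), cost_of_eq_sub b c (by ring), cost_self]
  ring

end Cost

theorem tendsto_affine_div_affine {p q r s : ℝ} (hr : r ≠ 0) :
    Tendsto (fun n : ℕ => ((n : ℝ) * p + q) / ((n : ℝ) * r + s)) atTop (𝓝 (p / r)) := by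
  have hlim : Tendsto (fun n : ℕ => (p + q / n) / (r + s / n)) atTop (𝓝 ((p + 0) / (r + 0))) :=
    ((tendsto_const_div_atTop_nhds_zero_nat q).const_add p).div
      ((tendsto_const_div_atTop_nhds_zero_nat s).const_add r) (by simpa using hr)
  rw [add_zero, add_zero] at hlim
  refine hlim.congr' ?_
  filter_upwards [eventually_ne_atTop 0] with n hn
  have : (n : ℝ) ≠ 0 := by exact_mod_cast hn
  rw [← mul_div_mul_left _ _ this]
  field_simp

theorem stmt_9 (b c a : ℝ) (hb : 0 < b) (hc : 0 < c) (k : ℕ) (hk : 1 ≤ k)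
    (x : Fin (2 * k) → ℝ)
    (hx : ∀ i : Fin (2 * k),
      x i = if (i : ℕ) < k - 1 then a else if (i : ℕ) = k - 1 then a + b else a + 2 * b) :
    -- the optimal social cost equals n·c + b  (the median is x_k = a + b, with peaks a, a + 2b)
    IsLeast (Set.range fun y => ∑ i, cost b c y (x i)) ((2 * k : ℝ) * c + b) ∧
    -- the expected social cost of the median-peaks mechanism equals n·c + (n-1)·b
    (1 / 2) * (∑ i, cost b c a (x i)) + (1 / 2) * (∑ i, cost b c (a + 2 * b) (x i))
      = (2 * k : ℝ) * c + ((2 * k : ℝ) - 1) * b ∧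
    -- the ratio (n·c + (n-1)·b)/(n·c + b) tends to 1 + b/c as n → ∞
    Filter.Tendsto
      (fun n : ℕ => ((n : ℝ) * c + ((n : ℝ) - 1) * b) / ((n : ℝ) * c + b))
      Filter.atTop (nhds (1 + b / c)) := by
  have social_cost : ∀ y, ∑ i, cost b c y (x i) = threeBlockCost b c a k y := by
    intro y
    simp_rw [hx, apply_ite (cost b c y), sum_fin_two_mul_three_blocks k hk, nsmul_eq_mul,
      Nat.cast_sub hk, Nat.cast_one, threeBlockCost]
  have hb' : |b| = b := abs_of_pos hb
  refine ⟨⟨⟨a + b, ?_⟩, ?_⟩, ?_, ?_⟩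
  · simp only [social_cost, threeBlockCost_median, hb']
  · rintro _ ⟨y, rfl⟩
    simpa only [social_cost, hb'] using threeBlockCost_median_le b c a k (by exact_mod_cast hk) y
  · rw [social_cost, social_cost, threeBlockCost_left_peak, threeBlockCost_right_peak, hb']
    ring
  · convert tendsto_affine_div_affine (p := c + b) (q := -b) (s := b) hc.ne' using 2
    · ring
    · field_simp
end

section
/- The expected maximum cost of the median-peaks randomized mechanism is at most max(1 + b/c, 2) times the optimal maximum cost on every instance. -/
private lemma core_ineq (b P d1 d2 : ℝ) (hb : 0 < b) (hP : 0 ≤ P)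
    (h1 : min |d1| (min |d1 - 2*b| |d1 + 2*b|) ≤ 2*P)
    (h2 : min |d2| (min |d2 - 2*b| |d2 + 2*b|) ≤ 2*P)
    (h12 : min |d1 - d2| (min |d1 - d2 - 2*b| |d1 - d2 + 2*b|) ≤ 2*P) :
    min |d1| |d1 + 2*b| + min |d2 - 2*b| |d2| ≤ 2*b + 4*P := by
  have hu1 : d1 ≤ b → min |d1| |d1 + 2*b| ≤ 2*P := by
    intro hd
    have habs : |d1| ≤ |d1 - 2*b| := by
      have e : |d1 - 2*b| = 2*b - d1 := by
        rw [abs_of_nonpos] <;> linarith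
      rcases abs_cases d1 with ⟨h, _⟩ | ⟨h, _⟩ <;> linarith
    have : min |d1| |d1 + 2*b| ≤ min |d1| (min |d1 - 2*b| |d1 + 2*b|) :=
      le_min (min_le_left _ _)
        (le_min (le_trans (min_le_left _ _) habs) (min_le_right _ _))
    linarith
  have hu2 : b ≤ d1 → min |d1| |d1 + 2*b| ≤ 2*b + 2*P := by
    intro hd
    have e : |d1| = d1 := abs_of_nonneg (by linarith)
    have hlow : d1 - 2*b ≤ min |d1| (min |d1 - 2*b| |d1 + 2*b|) :=
      le_min (by linarith [le_abs_self d1])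
        (le_min (le_abs_self _) (by linarith [le_abs_self (d1 + 2*b)]))
    have := min_le_left |d1| |d1 + 2*b|
    linarith
  have hv1 : -b ≤ d2 → min |d2 - 2*b| |d2| ≤ 2*P := by
    intro hd
    have habs : |d2| ≤ |d2 + 2*b| := by
      have e : |d2 + 2*b| = d2 + 2*b := abs_of_nonneg (by linarith)
      rcases abs_cases d2 with ⟨h, _⟩ | ⟨h, _⟩ <;> linarith
    have : min |d2 - 2*b| |d2| ≤ min |d2| (min |d2 - 2*b| |d2 + 2*b|) :=
      le_min (min_le_right _ _)
        (le_min (min_le_left _ _) (le_trans (min_le_right _ _) habs))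
    linarith
  have hv2 : d2 ≤ -b → min |d2 - 2*b| |d2| ≤ 2*b + 2*P := by
    intro hd
    have e : |d2| = -d2 := abs_of_nonpos (by linarith)
    have hlow : -d2 - 2*b ≤ min |d2| (min |d2 - 2*b| |d2 + 2*b|) :=
      le_min (by linarith) (le_min (by linarith [neg_abs_le (d2 - 2*b)])
        (by linarith [neg_abs_le (d2 + 2*b)]))
    have := min_le_right |d2 - 2*b| |d2|
    linarith
  rcases le_total d1 b with hcase1 | hcase1 <;> rcases le_total (-b) d2 with hcase2 | hcase2
  · linarith [hu1 hcase1, hv1 hcase2]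
  · linarith [hu1 hcase1, hv2 hcase2]
  · linarith [hu2 hcase1, hv1 hcase2]
  · have e1 : |d1| = d1 := abs_of_nonneg (by linarith)
    have e2 : |d2| = -d2 := abs_of_nonpos (by linarith)
    have hlow : d1 - d2 - 2*b ≤ min |d1 - d2| (min |d1 - d2 - 2*b| |d1 - d2 + 2*b|) :=
      le_min (by linarith [le_abs_self (d1 - d2)])
        (le_min (le_abs_self _) (by linarith [le_abs_self (d1 - d2 + 2*b)]))
    have u1 := min_le_left |d1| |d1 + 2*b|
    have u2 := min_le_right |d2 - 2*b| |d2|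
    linarith

theorem stmt_11 (b c : ℝ) (hb : 0 < b) (hc : 0 < c) (n : ℕ) (hn : 0 < n)
    (x : Fin n → ℝ) (hmono : Monotone x)
    (m : Fin n) (hm : (m : ℕ) = (n + 1) / 2 - 1)
    (hne : (Finset.univ : Finset (Fin n)).Nonempty)
    (MCopt : ℝ)
    (hopt : IsGLB (Set.range fun y => Finset.univ.sup' hne fun i => cost b c y (x i)) MCopt) :
    (1 / 2) * (Finset.univ.sup' hne fun i => cost b c (x m - b) (x i))
      + (1 / 2) * (Finset.univ.sup' hne fun i => cost b c (x m + b) (x i))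
      ≤ max (1 + b / c) 2 * MCopt := by
  -- lower bound on MCopt from any pair of agents
  have key : ∀ i j : Fin n,
      c + (min |x i - x j| (min |x i - x j - 2*b| |x i - x j + 2*b|)) / 2 ≤ MCopt := by
    intro i j
    apply hopt.2
    rintro _ ⟨y, rfl⟩
    have hy1 : cost b c y (x i) ≤ Finset.univ.sup' hne fun k => cost b c y (x k) :=
      Finset.le_sup' (fun k => cost b c y (x k)) (Finset.mem_univ i)
    have hy2 : cost b c y (x j) ≤ Finset.univ.sup' hne fun k => cost b c y (x k) :=
      Finset.le_sup' (fun k => cost b c y (x k)) (Finset.mem_univ j)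
    have t1 : |x i - x j| ≤ |x i - b - y| + |x j - b - y| := by
      have h := abs_sub (x i - b - y) (x j - b - y)
      have e : x i - b - y - (x j - b - y) = x i - x j := by ring
      rwa [e] at h
    have t2 : |x i - x j - 2*b| ≤ |x i - b - y| + |x j + b - y| := by
      have h := abs_sub (x i - b - y) (x j + b - y)
      have e : x i - b - y - (x j + b - y) = x i - x j - 2*b := by ring
      rwa [e] at h
    have t3 : |x i - x j + 2*b| ≤ |x i + b - y| + |x j - b - y| := by
      have h := abs_sub (x i + b - y) (x j - b - y)
      have e : x i + b - y - (x j - b - y) = x i - x j + 2*b := by ring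
      rwa [e] at h
    have t4 : |x i - x j| ≤ |x i + b - y| + |x j + b - y| := by
      have h := abs_sub (x i + b - y) (x j + b - y)
      have e : x i + b - y - (x j + b - y) = x i - x j := by ring
      rwa [e] at h
    have m1 := min_le_left |x i - x j| (min |x i - x j - 2*b| |x i - x j + 2*b|)
    have m2 : min |x i - x j| (min |x i - x j - 2*b| |x i - x j + 2*b|) ≤ |x i - x j - 2*b| :=
      le_trans (min_le_right _ _) (min_le_left _ _)
    have m3 : min |x i - x j| (min |x i - x j - 2*b| |x i - x j + 2*b|) ≤ |x i - x j + 2*b| :=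
      le_trans (min_le_right _ _) (min_le_right _ _)
    simp only [cost] at hy1 hy2 ⊢
    rcases min_cases |x i - b - y| |x i + b - y| with ⟨e1, _⟩ | ⟨e1, _⟩ <;>
      rcases min_cases |x j - b - y| |x j + b - y| with ⟨e2, _⟩ | ⟨e2, _⟩ <;>
      rw [e1] at hy1 <;> rw [e2] at hy2 <;> linarith
  obtain ⟨i1, -, hi1⟩ := Finset.exists_mem_eq_sup' hne (fun i => cost b c (x m - b) (x i))
  obtain ⟨i2, -, hi2⟩ := Finset.exists_mem_eq_sup' hne (fun i => cost b c (x m + b) (x i))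
  set d1 := x i1 - x m with hd1
  set d2 := x i2 - x m with hd2
  have hP : 0 ≤ MCopt - c := by
    have h0 : 0 ≤ min |x i1 - x i1| (min |x i1 - x i1 - 2*b| |x i1 - x i1 + 2*b|) :=
      le_min (abs_nonneg _) (le_min (abs_nonneg _) (abs_nonneg _))
    linarith [key i1 i1]
  have h1 : min |d1| (min |d1 - 2*b| |d1 + 2*b|) ≤ 2*(MCopt - c) := by
    have := key i1 m; rw [← hd1] at this; linarith
  have h2 : min |d2| (min |d2 - 2*b| |d2 + 2*b|) ≤ 2*(MCopt - c) := by
    have := key i2 m; rw [← hd2] at this; linarith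
  have h12 : min |d1 - d2| (min |d1 - d2 - 2*b| |d1 - d2 + 2*b|) ≤ 2*(MCopt - c) := by
    have := key i1 i2
    have e : x i1 - x i2 = d1 - d2 := by rw [hd1, hd2]; ring
    rw [e] at this; linarith
  have hcore := core_ineq b (MCopt - c) d1 d2 hb hP h1 h2 h12
  have e1 : (Finset.univ.sup' hne fun i => cost b c (x m - b) (x i))
      = c + min |d1| |d1 + 2*b| := by
    rw [hi1]
    simp only [cost]
    rw [show x i1 - b - (x m - b) = d1 by rw [hd1]; ring,
      show x i1 + b - (x m - b) = d1 + 2*b by rw [hd1]; ring]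
  have e2 : (Finset.univ.sup' hne fun i => cost b c (x m + b) (x i))
      = c + min |d2 - 2*b| |d2| := by
    rw [hi2]
    simp only [cost]
    rw [show x i2 - b - (x m + b) = d2 - 2*b by rw [hd2]; ring,
      show x i2 + b - (x m + b) = d2 by rw [hd2]; ring]
  rw [e1, e2]
  rcases le_total b c with hbc | hbc
  · have hmax : (2:ℝ) ≤ max (1 + b / c) 2 := le_max_right _ _
    have hMc : c ≤ MCopt := by linarith
    nlinarith [hcore, hP, hc, hmax, hMc]
  · have hdiv : (1:ℝ) ≤ b / c := (le_div_iff₀ hc).mpr (by linarith)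
    have hmax : max (1 + b / c) 2 = 1 + b / c := max_eq_left (by linarith)
    rw [hmax]
    have hcb : c * (b / c) = b := by field_simp
    nlinarith [hcore, hP, hdiv, hcb]
end

section
/- For two agents with x₁ + b < x₂ - b, setting λ = (x₂ - b) - (x₁ + b): for any probability distribution D over ℝ, at least one of E_{y~D}[cost(y, x₁)] ≥ c + λ/2 and E_{y~D}[cost(y, x₂)] ≥ c + λ/2 holds. -/
/-! Pointwise, `cost(y, x₁) ≥ c + (y - (x₁ + b))` and `cost(y, x₂) ≥ c + ((x₂ - b) - y)`, so the two
costs sum to at least `2c + λ` for every `y`. Integrating, the two expected costs sum to at least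
`2c + λ`, hence one of them is at least `c + λ/2`. -/

open MeasureTheory

section Cost

variable {b : ℝ} (c y x : ℝ)

theorem add_sub_le_cost (hb : 0 ≤ b) : c + (y - (x + b)) ≤ cost b c y x := by
  unfold cost
  have h₁ := neg_abs_le (x - b - y)
  have h₂ := neg_abs_le (x + b - y)
  have : y - (x + b) ≤ min |x - b - y| |x + b - y| := le_min (by linarith) (by linarith)
  linarith

theorem add_sub_le_cost' (hb : 0 ≤ b) : c + ((x - b) - y) ≤ cost b c y x := by
  unfold cost
  have h₁ := le_abs_self (x - b - y)
  have h₂ := le_abs_self (x + b - y)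
  have : (x - b) - y ≤ min |x - b - y| |x + b - y| := le_min (by linarith) (by linarith)
  linarith

theorem two_mul_add_gap_le_cost_add_cost (hb : 0 ≤ b) (x₁ x₂ : ℝ) :
    2 * c + ((x₂ - b) - (x₁ + b)) ≤ cost b c y x₁ + cost b c y x₂ := by
  linarith [add_sub_le_cost c y x₁ hb, add_sub_le_cost' c y x₂ hb]

end Cost

theorem half_le_integral_or_half_le_integral {α : Type*} [MeasurableSpace α] {μ : Measure α}
    [IsProbabilityMeasure μ] {f g : α → ℝ} {a : ℝ} (hf : Integrable f μ) (hg : Integrable g μ)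
    (hfg : ∀ x, a ≤ f x + g x) :
    a / 2 ≤ ∫ x, f x ∂μ ∨ a / 2 ≤ ∫ x, g x ∂μ := by
  have hsum : a ≤ (∫ x, f x ∂μ) + ∫ x, g x ∂μ := by
    rw [← integral_add hf hg]
    simpa using integral_mono (integrable_const a) (hf.add hg) hfg
  by_contra! h
  linarith [h.1, h.2]

theorem stmt_12_general (b c x₁ x₂ : ℝ) (hb : 0 < b)
    (μ : Measure ℝ) [IsProbabilityMeasure μ]
    (h1 : Integrable (fun y => cost b c y x₁) μ)
    (h2 : Integrable (fun y => cost b c y x₂) μ) :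
    c + ((x₂ - b) - (x₁ + b)) / 2 ≤ ∫ y, cost b c y x₁ ∂μ ∨
    c + ((x₂ - b) - (x₁ + b)) / 2 ≤ ∫ y, cost b c y x₂ ∂μ := by
  have hhalf : c + ((x₂ - b) - (x₁ + b)) / 2 = (2 * c + ((x₂ - b) - (x₁ + b))) / 2 := by ring
  rw [hhalf]
  exact half_le_integral_or_half_le_integral h1 h2
    (fun y => two_mul_add_gap_le_cost_add_cost c y hb.le x₁ x₂)

theorem stmt_12 (b c x₁ x₂ : ℝ) (hb : 0 < b) (hc : 0 < c) (hgap : x₁ + b < x₂ - b)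
    (μ : Measure ℝ) [IsProbabilityMeasure μ]
    (h1 : Integrable (fun y => cost b c y x₁) μ)
    (h2 : Integrable (fun y => cost b c y x₂) μ) :
    c + ((x₂ - b) - (x₁ + b)) / 2 ≤ ∫ y, cost b c y x₁ ∂μ ∨
    c + ((x₂ - b) - (x₁ + b)) / 2 ≤ ∫ y, cost b c y x₂ ∂μ :=
  stmt_12_general b c x₁ x₂ hb μ h1 h2
end

section
/- The mechanism that always outputs x₁ - b (the left peak of the leftmost reported agent) is strategyproof: for every profile x₁ ≤ ... ≤ xₙ, every agent i, and every misreport x'ᵢ, cost(f(x'ᵢ, x₋ᵢ), xᵢ) ≥ cost(f(x), xᵢ), where f outputs (min of reports) − b. -/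
theorem stmt_14 (b c : ℝ) (hb : 0 < b) (hc : 0 < c) (n : ℕ)
    (x : Fin n → ℝ) (i : Fin n) (x' : ℝ) :
    cost b c (Finset.univ.inf' ⟨i, Finset.mem_univ i⟩ x - b) (x i)
      ≤ cost b c (Finset.univ.inf' ⟨i, Finset.mem_univ i⟩ (Function.update x i x') - b) (x i) := by
  have hne : (Finset.univ : Finset (Fin n)).Nonempty := ⟨i, Finset.mem_univ i⟩
  set m := Finset.univ.inf' hne x with hm
  set m' := Finset.univ.inf' hne (Function.update x i x') with hm'
  have hmle : m ≤ x i := Finset.inf'_le _ (Finset.mem_univ i)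
  -- truthful cost equals c + (x i - m)
  have h1 : |x i - b - (m - b)| = x i - m := by
    rw [abs_of_nonneg] <;> linarith
  have h2 : |x i + b - (m - b)| = x i + 2*b - m := by
    rw [abs_of_nonneg] <;> linarith
  have htruth : cost b c (m - b) (x i) = c + (x i - m) := by
    unfold cost
    rw [h1, h2, min_eq_left (by linarith)]
  rw [htruth]
  unfold cost
  have hgoal : x i - m ≤ min |x i - b - (m' - b)| |x i + b - (m' - b)| := by
    obtain ⟨j, -, hj⟩ := Finset.exists_mem_eq_inf' hne x
    by_cases hji : j = i
    · -- m = x i, truthful cost is minimal possible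
      have : x i - m = 0 := by rw [hm, hj, hji]; ring
      rw [this]
      exact le_min (abs_nonneg _) (abs_nonneg _)
    · -- m attained elsewhere, so m' ≤ m
      have hm'le : m' ≤ m := by
        have := Finset.inf'_le (f := Function.update x i x') (Finset.mem_univ j)
        rwa [Function.update_of_ne hji, ← hj] at this
      apply le_min
      · calc x i - m ≤ x i - m' := by linarith
          _ ≤ |x i - b - (m' - b)| := by
            rw [abs_of_nonneg (by linarith)]; linarith
      · calc x i - m ≤ x i + 2*b - m' := by linarith
          _ ≤ |x i + b - (m' - b)| := by
            rw [abs_of_nonneg (by linarith)]; linarith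
  linarith
end

section
/- For any instance x₁ ≤ ... ≤ xₙ (n ≥ 2), the mechanism outputting x₁ - b has social cost Σᵢ cost(x₁ - b, xᵢ) = n·c + Σᵢ (xᵢ - x₁), and on the instance where x₂ = ... = xₙ = x₁ + d, the ratio of this social cost to the optimal social cost tends to n - 1 as d → ∞. -/
lemma sum_eval (b c a d y : ℝ) (n : ℕ) :
    ∑ i : Fin (n + 2), cost b c y (if i = 0 then a else a + d) =
      ((n : ℝ) + 2) * c + min |a - b - y| |a + b - y|
        + ((n : ℝ) + 1) * min |a + d - b - y| |a + d + b - y| := by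
  rw [Fin.sum_univ_succ]
  simp only [Fin.succ_ne_zero, if_neg, if_pos rfl, Finset.sum_const, Finset.card_univ,
    Fintype.card_fin, nsmul_eq_mul]
  unfold cost
  push_cast
  ring

lemma sInf_eval (b c a d : ℝ) (hb : 0 < b) (n : ℕ) (hd : 2 * b ≤ d) :
    sInf (Set.range fun y => ∑ i : Fin (n + 2), cost b c y (if i = 0 then a else a + d)) =
      ((n : ℝ) + 2) * c + d - 2 * b := by
  have key : ∀ y : ℝ, ((n : ℝ) + 2) * c + d - 2 * b ≤
      ∑ i : Fin (n + 2), cost b c y (if i = 0 then a else a + d) := by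
    intro y
    rw [sum_eval]
    have t1 : d - 2*b ≤ |a + b - y| + |a + d - b - y| := by
      have := abs_sub (a + d - b - y) (a + b - y)
      have h2 : |(a + d - b - y) - (a + b - y)| = d - 2*b := by
        rw [show (a + d - b - y) - (a + b - y) = d - 2*b by ring, abs_of_nonneg (by linarith)]
      linarith [abs_sub_comm (a + d - b - y) (a + b - y)]
    have t2 : d - 2*b ≤ |a - b - y| + |a + d - b - y| := by
      have := abs_sub (a + d - b - y) (a - b - y)
      have h2 : |(a + d - b - y) - (a - b - y)| = d := by
        rw [show (a + d - b - y) - (a - b - y) = d by ring, abs_of_nonneg (by linarith)]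
      linarith
    have t3 : d - 2*b ≤ |a - b - y| + |a + d + b - y| := by
      have h2 : |(a + d + b - y) - (a - b - y)| = d + 2*b := by
        rw [show (a + d + b - y) - (a - b - y) = d + 2*b by ring, abs_of_nonneg (by linarith)]
      have := abs_sub (a + d + b - y) (a - b - y)
      linarith
    have t4 : d - 2*b ≤ |a + b - y| + |a + d + b - y| := by
      have h2 : |(a + d + b - y) - (a + b - y)| = d := by
        rw [show (a + d + b - y) - (a + b - y) = d by ring, abs_of_nonneg (by linarith)]
      have := abs_sub (a + d + b - y) (a + b - y)
      linarith
    have hg0 : 0 ≤ min |a + d - b - y| |a + d + b - y| := le_min (abs_nonneg _) (abs_nonneg _)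
    have hn1 : (1:ℝ) ≤ (n:ℝ) + 1 := by have := Nat.cast_nonneg (α := ℝ) n; linarith
    have hfg : d - 2*b ≤ min |a - b - y| |a + b - y| + min |a + d - b - y| |a + d + b - y| := by
      rcases min_cases |a - b - y| |a + b - y| with ⟨h, _⟩ | ⟨h, _⟩ <;>
        rcases min_cases |a + d - b - y| |a + d + b - y| with ⟨h', _⟩ | ⟨h', _⟩ <;>
        rw [h, h'] <;> linarith
    nlinarith [mul_le_mul_of_nonneg_right hn1 hg0]
  have hne : (Set.range fun y => ∑ i : Fin (n + 2),
      cost b c y (if i = 0 then a else a + d)).Nonempty := Set.range_nonempty _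
  have hbdd : BddBelow (Set.range fun y => ∑ i : Fin (n + 2),
      cost b c y (if i = 0 then a else a + d)) := ⟨_, fun z hz => by obtain ⟨y, hy⟩ := hz; rw [← hy]; exact key y⟩
  apply le_antisymm
  · apply csInf_le hbdd
    refine ⟨a + d - b, ?_⟩
    show ∑ i : Fin (n + 2), cost b c (a + d - b) (if i = 0 then a else a + d) = _
    rw [sum_eval]
    have e1 : min |a - b - (a + d - b)| |a + b - (a + d - b)| = d - 2*b := by
      rw [show a - b - (a + d - b) = -d by ring, show a + b - (a + d - b) = 2*b - d by ring,
        abs_neg, abs_of_nonneg (by linarith), abs_of_nonpos (by linarith)]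
      rw [min_eq_right (by linarith)]
      ring
    have e2 : min |a + d - b - (a + d - b)| |a + d + b - (a + d - b)| = 0 := by
      rw [show a + d - b - (a + d - b) = 0 by ring, show a + d + b - (a + d - b) = 2*b by ring,
        abs_zero, abs_of_nonneg (by linarith), min_eq_left (by linarith)]
    rw [e1, e2]; ring
  · exact le_csInf hne fun z hz => by obtain ⟨y, hy⟩ := hz; rw [← hy]; exact key y

theorem stmt_15 (b c a : ℝ) (hb : 0 < b) (hc : 0 < c) (n : ℕ) :
    -- social cost of the leftmost-left-peak mechanism on any instance
    (∀ x : Fin (n + 2) → ℝ, (∀ i, x 0 ≤ x i) →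
      ∑ i, cost b c (x 0 - b) (x i) = ((n : ℝ) + 2) * c + ∑ i, (x i - x 0)) ∧
    -- on the instance x₁ = a, x₂ = ... = xₙ = a + d, the ratio tends to n - 1 as d → ∞
    Filter.Tendsto
      (fun d : ℝ =>
        (((n : ℝ) + 2) * c + ((n : ℝ) + 1) * d) /
          sInf (Set.range fun y => ∑ i : Fin (n + 2), cost b c y (if i = 0 then a else a + d)))
      Filter.atTop (nhds (((n : ℝ) + 2) - 1)) := by
  constructor
  · intro x hx
    have hterm : ∀ i, cost b c (x 0 - b) (x i) = c + (x i - x 0) := by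
      intro i
      have h := hx i
      unfold cost
      rw [show x i - b - (x 0 - b) = x i - x 0 by ring,
        show x i + b - (x 0 - b) = (x i - x 0) + 2*b by ring,
        abs_of_nonneg (by linarith), abs_of_nonneg (by linarith),
        min_eq_left (by linarith)]
    simp only [hterm]
    rw [Finset.sum_add_distrib, Finset.sum_const, Finset.card_univ, Fintype.card_fin,
      nsmul_eq_mul]
    push_cast; ring
  · set A := ((n : ℝ) + 2) * c with hA
    set B := ((n : ℝ) + 1) with hB
    have hlim : Filter.Tendsto (fun d : ℝ => (A / d + B) / ((A - 2*b) / d + 1))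
        Filter.atTop (nhds ((0 + B) / (0 + 1))) := by
      apply Filter.Tendsto.div
      · exact (tendsto_const_nhds.div_atTop Filter.tendsto_id).add tendsto_const_nhds
      · exact (tendsto_const_nhds.div_atTop Filter.tendsto_id).add tendsto_const_nhds
      · norm_num
    have heq : ∀ᶠ d : ℝ in Filter.atTop,
        (A / d + B) / ((A - 2*b) / d + 1) =
        (((n : ℝ) + 2) * c + ((n : ℝ) + 1) * d) /
          sInf (Set.range fun y => ∑ i : Fin (n + 2), cost b c y (if i = 0 then a else a + d)) := by
      filter_upwards [Filter.eventually_gt_atTop 0, Filter.eventually_ge_atTop (2*b)]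
        with d hd0 hd2
      rw [sInf_eval b c a d hb n hd2]
      have hden : (0:ℝ) < ((n:ℝ) + 2) * c + d - 2 * b := by
        have : (0:ℝ) < ((n:ℝ) + 2) * c := by positivity
        nlinarith
      rw [hA, hB]
      have hd0' : d ≠ 0 := ne_of_gt hd0
      have hden2 : (((n:ℝ) + 2) * c - 2 * b) / d + 1 ≠ 0 := by
        have he : (((n:ℝ) + 2) * c - 2 * b) / d + 1 = (((n:ℝ) + 2) * c + d - 2 * b) / d := by
          field_simp; first | ring1 | (left; ring1) | (left; trivial) | trivial | tauto
        rw [he]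
        exact ne_of_gt (div_pos hden hd0)
      rw [div_eq_div_iff hden2 (ne_of_gt hden)]
      field_simp
      first | ring1 | (left; ring1) | (left; trivial) | trivial | tauto
    have : ((0:ℝ) + B) / (0 + 1) = ((n : ℝ) + 2) - 1 := by rw [hB]; ring
    rw [← this]
    exact Filter.Tendsto.congr' heq hlim
end

section
/- On the instance with two agents where x₂ - b = x₁ + b, the mechanism outputting x₁ - b has maximum cost 2b + c while the optimal maximum cost is c, so the ratio 1 + 2b/c is attained. -/
theorem stmt_17 (b c x₁ x₂ : ℝ) (hb : 0 < b) (hc : 0 < c) (h : x₂ - b = x₁ + b) :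
    max (cost b c (x₁ - b) x₁) (cost b c (x₁ - b) x₂) = 2 * b + c ∧
    IsLeast (Set.range fun y => max (cost b c y x₁) (cost b c y x₂)) c ∧
    (2 * b + c) / c = 1 + 2 * b / c := by
  have hx2 : x₂ = x₁ + 2 * b := by linarith
  refine ⟨?_, ⟨⟨x₁ + b, ?_⟩, ?_⟩, ?_⟩
  · simp only [cost, hx2]
    rw [show x₁ - b - (x₁ - b) = 0 by ring, show x₁ + b - (x₁ - b) = 2*b by ring,
        show x₁ + 2*b - b - (x₁ - b) = 2*b by ring, show x₁ + 2*b + b - (x₁ - b) = 4*b by ring,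
        abs_zero, abs_of_pos (by linarith : (0:ℝ) < 2*b), abs_of_pos (by linarith : (0:ℝ) < 4*b)]
    rw [min_eq_left (by linarith), min_eq_left (by linarith), max_eq_right (by linarith)]; ring
  · simp only [cost, hx2]
    rw [show x₁ - b - (x₁ + b) = -(2*b) by ring, show x₁ + b - (x₁ + b) = 0 by ring,
        show x₁ + 2*b - b - (x₁ + b) = 0 by ring, show x₁ + 2*b + b - (x₁ + b) = 2*b by ring,
        abs_zero, abs_neg, abs_of_pos (by linarith : (0:ℝ) < 2*b)]
    rw [min_eq_right (by linarith), min_eq_left (by linarith), max_self]; ring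
  · rintro v ⟨y, rfl⟩
    simp only [cost]
    have h1 : 0 ≤ min |x₁ - b - y| |x₁ + b - y| := le_min (abs_nonneg _) (abs_nonneg _)
    exact le_max_of_le_left (by linarith)
  · field_simp; ring
end

section
/- The mechanism minimizing the maximum cost for two agents, which outputs (x₁ + x₂)/2 when x₁ + b < x₂ - b, is not strategyproof: on any such instance, if agent 2 misreports x₂' = 2x₂ - 2b - x₁, the new output is x₂ - b and agent 2's cost strictly decreases from c + ((x₂-b) - (x₁+b))/2 to c. -/
theorem stmt_18 (b c x₁ x₂ : ℝ) (hb : 0 < b) (hc : 0 < c) (h12 : x₁ < x₂)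
    (hgap : x₁ + b < x₂ - b) :
    -- the misreport x₂' = 2x₂ - 2b - x₁ moves the midpoint output to x₂ - b
    (x₁ + (2 * x₂ - 2 * b - x₁)) / 2 = x₂ - b ∧
    x₁ + b < (2 * x₂ - 2 * b - x₁) - b ∧
    -- truthful cost of agent 2 under the midpoint output
    cost b c ((x₁ + x₂) / 2) x₂ = c + ((x₂ - b) - (x₁ + b)) / 2 ∧
    -- cost of agent 2 after misreporting
    cost b c (x₂ - b) x₂ = c ∧
    cost b c (x₂ - b) x₂ < cost b c ((x₁ + x₂) / 2) x₂ := by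
  have h1 : cost b c ((x₁ + x₂) / 2) x₂ = c + ((x₂ - b) - (x₁ + b)) / 2 := by
    unfold cost
    have e1 : |x₂ - b - (x₁ + x₂) / 2| = (x₂ - x₁) / 2 - b := by
      rw [abs_of_nonneg]; ring_nf; linarith
    have e2 : |x₂ + b - (x₁ + x₂) / 2| = (x₂ - x₁) / 2 + b := by
      rw [abs_of_nonneg]; ring_nf; linarith
    rw [e1, e2, min_eq_left (by linarith)]
    ring
  have h2 : cost b c (x₂ - b) x₂ = c := by
    unfold cost
    have : |x₂ - b - (x₂ - b)| = 0 := by simp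
    rw [this, min_eq_left (abs_nonneg _)]
    ring
  refine ⟨by ring, by linarith, h1, h2, by rw [h1, h2]; linarith⟩
end
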